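/- Fix N ≥ 2 and β ∈ ℝ, take β′ = β in the two-bath adjoint Lindblad generator L*, and set H^{(S)} := Σ_{k=1}^N σz^{(k)}, Z := Tr(exp(−βH^{(S)})). Let ρ be a positive definite Hermitian 2^N×2^N matrix of trace 1, let (Ψ_j) be an orthonormal basis of ℂ^{2^N} with ρΨ_j = ρ_jΨ_j and ρ_j > 0 for all j, and define log ρ := Σ_j (ln ρ_j)|Ψ_j⟩⟨Ψ_j| and log ρ^β := −βH^{(S)} − (ln Z)·I. Then the entropy production σ(ρ) := Tr( L*(ρ)·(log ρ^β − log ρ) ) satisfies σ(ρ) = 4β₀ · Σ_{j,k} ( |⟨Ψ_k, σ₊^{(1)}Ψ_j⟩|² + |⟨Ψ_k, σ₊^{(N)}Ψ_j⟩|² ) · (e^{2β}ρ_k − ρ_j) · (ln ρ_k − ln ρ_j + 2β). -/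

import Mathlib

open Matrix Complex Filter
open scoped Kronecker Topology ComplexOrder

noncomputable section

/-- The `N`-spin configuration space index: `(ℂ²)^{⊗N}` is identified with
functions `Fin N → Fin 2 → ℂ`, so `2^N × 2^N` matrices are indexed by `Fin N → Fin 2`. -/
abbrev Spin (N : ℕ) := Fin N → Fin 2

def sx : Matrix (Fin 2) (Fin 2) ℂ := !![0, 1; 1, 0]
def sy : Matrix (Fin 2) (Fin 2) ℂ := !![0, -Complex.I; Complex.I, 0]
def sz : Matrix (Fin 2) (Fin 2) ℂ := !![1, 0; 0, -1]
def sp : Matrix (Fin 2) (Fin 2) ℂ := !![0, 1; 0, 0]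
def sm : Matrix (Fin 2) (Fin 2) ℂ := !![0, 0; 1, 0]
def np : Matrix (Fin 2) (Fin 2) ℂ := !![1, 0; 0, 0]
def nm : Matrix (Fin 2) (Fin 2) ℂ := !![0, 0; 0, 1]

/-- `M^{(k)} = I ⊗ ... ⊗ M ⊗ ... ⊗ I`: the 2×2 matrix `M` acting at site `k`
of the chain, under the iterated Kronecker identification. -/
def site {N : ℕ} (k : Fin N) (M : Matrix (Fin 2) (Fin 2) ℂ) :
    Matrix (Spin N) (Spin N) ℂ :=
  Matrix.of fun x y => ∏ j : Fin N, if j = k then M (x j) (y j) else if x j = y j then 1 else 0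

/-- The XY spin-chain Hamiltonian
`H_S = Σ_{k=1}^N σz^{(k)} + Σ_{k=1}^{N-1} (σx^{(k)}σx^{(k+1)} + σy^{(k)}σy^{(k+1)})`. -/
def HS (N : ℕ) : Matrix (Spin N) (Spin N) ℂ :=
  (∑ k : Fin N, site k sz) +
    ∑ k : Fin N, ∑ l : Fin N,
      if (l : ℕ) = (k : ℕ) + 1 then site k sx * site l sx + site k sy * site l sy else 0

/-- `β₀ = e^{-β}/(e^{-β}+e^{β})`. -/
def b0 (β : ℝ) : ℝ := Real.exp (-β) / (Real.exp (-β) + Real.exp β)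

/-- `β₁ = e^{β}/(e^{-β}+e^{β})`. -/
def b1 (β : ℝ) : ℝ := Real.exp β / (Real.exp (-β) + Real.exp β)

/-- The single-spin Gibbs state `ρ_β = diag(β₀, β₁)`. -/
def rhoB (β : ℝ) : Matrix (Fin 2) (Fin 2) ℂ := !![(b0 β : ℂ), 0; 0, (b1 β : ℂ)]

/-- Heisenberg-picture dissipator at site `k`, inverse temperature `β`:
`2β₀(2σ₋^{(k)}Xσ₊^{(k)} − {n₋^{(k)},X}) + 2β₁(2σ₊^{(k)}Xσ₋^{(k)} − {n₊^{(k)},X})`. -/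
def dissAt {N : ℕ} (k : Fin N) (β : ℝ) (X : Matrix (Spin N) (Spin N) ℂ) :
    Matrix (Spin N) (Spin N) ℂ :=
  (2 * b0 β : ℂ) • (2 • (site k sm * X * site k sp) - (site k nm * X + X * site k nm)) +
    (2 * b1 β : ℂ) • (2 • (site k sp * X * site k sm) - (site k np * X + X * site k np))

/-- Schrödinger-picture (adjoint) dissipator at site `k`:
`2β₀(2σ₊^{(k)}ρσ₋^{(k)} − {n₋^{(k)},ρ}) + 2β₁(2σ₋^{(k)}ρσ₊^{(k)} − {n₊^{(k)},ρ})`. -/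
def dissStarAt {N : ℕ} (k : Fin N) (β : ℝ) (ρ : Matrix (Spin N) (Spin N) ℂ) :
    Matrix (Spin N) (Spin N) ℂ :=
  (2 * b0 β : ℂ) • (2 • (site k sp * ρ * site k sm) - (site k nm * ρ + ρ * site k nm)) +
    (2 * b1 β : ℂ) • (2 • (site k sm * ρ * site k sp) - (site k np * ρ + ρ * site k np))

/-- The two-bath Lindblad generator (Heisenberg picture), baths at sites `k` and `l`. -/
def Ltwo {N : ℕ} (k l : Fin N) (β β' : ℝ) (X : Matrix (Spin N) (Spin N) ℂ) :
    Matrix (Spin N) (Spin N) ℂ :=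
  Complex.I • (HS N * X - X * HS N) + dissAt k β X + dissAt l β' X

/-- The two-bath adjoint Lindblad generator, baths at sites `k` and `l`. -/
def LtwoStar {N : ℕ} (k l : Fin N) (β β' : ℝ) (ρ : Matrix (Spin N) (Spin N) ℂ) :
    Matrix (Spin N) (Spin N) ℂ :=
  (-Complex.I) • (HS N * ρ - ρ * HS N) + dissStarAt k β ρ + dissStarAt l β' ρ

/-- The `N`-fold Kronecker product `ρ_β ⊗ ... ⊗ ρ_β` under the iterated-Kronecker
identification. -/
def prodState (N : ℕ) (β : ℝ) : Matrix (Spin N) (Spin N) ℂ :=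
  Matrix.of fun x y => ∏ j : Fin N, rhoB β (x j) (y j)

/-- A density matrix: Hermitian positive semidefinite with trace 1. -/
def IsDensityMatrix {n : Type*} [Fintype n] [DecidableEq n] (ρ : Matrix n n ℂ) : Prop :=
  ρ.IsHermitian ∧ ρ.PosSemidef ∧ ρ.trace = 1

/-!
Diagonalise `ρ = Σ r_j |Ψ_j⟩⟨Ψ_j|`; then `log ρ = Σ log r_j |Ψ_j⟩⟨Ψ_j|` commutes with `ρ`. The
Hamiltonian part of `L*` contributes nothing: `Tr([H_S, ρ] Y)` vanishes for `Y = log ρ` and `Y = 1`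
because they commute with `ρ`, and for `Y = H^{(S)} = Σ σz^{(k)}` because the total magnetisation
commutes with the XY chain. Each bath term is `2β₀ D_L + 2β₁ D_{L*}` with `L = σ₊^{(k)}` and
`D_L(ρ) = 2LρL* − {L*L, ρ}`. Now `D_L` is trace free, the ladder relation `[H^{(S)}, L] = 2L`
gives `Tr(D_L(ρ) H^{(S)}) = 4 Tr(LρL*)`, and in the eigenbasis
`Tr(L f(ρ) L* g(ρ)) = Σ_{j,k} f(r_j) g(r_k) |⟨Ψ_k, LΨ_j⟩|²`. Collecting the terms and using
`β₁ = e^{2β} β₀` gives the formula.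
-/

section Lindblad

variable {n : Type*} [Fintype n]

/-- Twice the usual GKSL dissipator `LρL* − ½{L*L, ρ}`: the normalisation of `dissStarAt`. -/
def lindbladDissipator (L ρ : Matrix n n ℂ) : Matrix n n ℂ :=
  2 • (L * ρ * Lᴴ) - (Lᴴ * L * ρ + ρ * (Lᴴ * L))

def lindbladDissipatorPair (a b : ℂ) (L ρ : Matrix n n ℂ) : Matrix n n ℂ :=
  a • lindbladDissipator L ρ + b • lindbladDissipator Lᴴ ρ

theorem trace_lindbladDissipator (L ρ : Matrix n n ℂ) : (lindbladDissipator L ρ).trace = 0 := by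
  have h₁ : (L * ρ * Lᴴ).trace = (Lᴴ * L * ρ).trace := trace_mul_cycle _ _ _
  have h₂ : (ρ * (Lᴴ * L)).trace = (Lᴴ * L * ρ).trace := trace_mul_comm _ _
  rw [lindbladDissipator, trace_sub, trace_add, trace_smul, h₁, h₂]
  ring

theorem Matrix.IsHermitian.commutator_conjTranspose {H L : Matrix n n ℂ} {ω : ℝ}
    (hH : H.IsHermitian) (hL : H * L - L * H = (ω : ℂ) • L) :
    H * Lᴴ - Lᴴ * H = ((-ω : ℝ) : ℂ) • Lᴴ := by
  have := congrArg Matrix.conjTranspose hL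
  rw [conjTranspose_sub, conjTranspose_mul, conjTranspose_mul, hH.eq, conjTranspose_smul,
    Complex.star_def, Complex.conj_ofReal] at this
  rw [Complex.ofReal_neg, neg_smul, ← this, neg_sub]

theorem trace_lindbladDissipator_mul_of_commutator {H L : Matrix n n ℂ} {ω : ℝ}
    (hH : H.IsHermitian) (hL : H * L - L * H = (ω : ℂ) • L) (ρ : Matrix n n ℂ) :
    (lindbladDissipator L ρ * H).trace = 2 * ω * (L * ρ * Lᴴ).trace := by
  have hHL : H * L = L * H + (ω : ℂ) • L := by rw [← hL]; abel
  have hLH : Lᴴ * H = H * Lᴴ + (ω : ℂ) • Lᴴ := by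
    rw [← neg_neg ((ω : ℂ) • Lᴴ), ← neg_smul, ← Complex.ofReal_neg,
      ← hH.commutator_conjTranspose hL]
    abel
  have h₁ : (L * ρ * Lᴴ * H).trace = (Lᴴ * L * ρ * H).trace + ω * (L * ρ * Lᴴ).trace := by
    rw [Matrix.mul_assoc _ Lᴴ, hLH, Matrix.mul_add, trace_add, Matrix.mul_smul, trace_smul,
      smul_eq_mul, ← Matrix.mul_assoc, trace_mul_comm, ← Matrix.mul_assoc, ← Matrix.mul_assoc]
  have h₂ : (L * ρ * Lᴴ * H).trace = (ρ * (Lᴴ * L) * H).trace + ω * (L * ρ * Lᴴ).trace := by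
    rw [Matrix.mul_assoc, Matrix.mul_assoc, trace_mul_comm L, Matrix.mul_assoc, Matrix.mul_assoc,
      hHL, Matrix.mul_add, Matrix.mul_add, trace_add, Matrix.mul_smul, Matrix.mul_smul,
      trace_smul, smul_eq_mul, trace_mul_cycle L, trace_mul_comm (Lᴴ * L)]
    simp only [Matrix.mul_assoc]
  simp only [lindbladDissipator, sub_mul, add_mul, smul_mul, trace_sub, trace_add, trace_smul]
  linear_combination h₁ + h₂

variable [DecidableEq n]

theorem trace_commutator_mul_eq_zero {H H₀ ρ D : Matrix n n ℂ} (hH : Commute H₀ H)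
    (hρ : Commute ρ D) (β c : ℂ) : ((H * ρ - ρ * H) * (-β • H₀ - c • 1 - D)).trace = 0 := by
  have h₀ : ((H * ρ - ρ * H) * H₀).trace = 0 := by
    rw [sub_mul, trace_sub, Matrix.mul_assoc, trace_mul_comm, Matrix.mul_assoc, hH.eq,
      ← Matrix.mul_assoc, sub_self]
  have h₁ : ((H * ρ - ρ * H) * D).trace = 0 := by
    rw [sub_mul, trace_sub, Matrix.mul_assoc, hρ.eq, trace_mul_cycle', ← Matrix.mul_assoc,
      sub_self]
  rw [mul_sub, mul_sub, Matrix.mul_smul, Matrix.mul_smul, mul_one, trace_sub, trace_sub,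
    trace_smul, trace_smul, h₀, h₁, trace_sub, trace_mul_comm H, sub_self]
  simp

end Lindblad

section Spectral

variable {n : Type*} [Fintype n] {Ψ : n → n → ℂ}

def spectralSum (Ψ : n → n → ℂ) (f : n → ℂ) : Matrix n n ℂ :=
  ∑ j, f j • vecMulVec (Ψ j) (star (Ψ j))

def transitionWeight (Ψ : n → n → ℂ) (L : Matrix n n ℂ) (j k : n) : ℝ :=
  ‖star (Ψ k) ⬝ᵥ L *ᵥ Ψ j‖ ^ 2

theorem star_dotProduct_conjTranspose_mulVec (L : Matrix n n ℂ) (u v : n → ℂ) :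
    star u ⬝ᵥ Lᴴ *ᵥ v = star (star v ⬝ᵥ L *ᵥ u) := by
  rw [star_dotProduct, star_mulVec, conjTranspose_conjTranspose, ← dotProduct_mulVec]

theorem transitionWeight_conjTranspose (L : Matrix n n ℂ) (j k : n) :
    transitionWeight Ψ Lᴴ j k = transitionWeight Ψ L k j := by
  rw [transitionWeight, transitionWeight, star_dotProduct_conjTranspose_mulVec, norm_star]

theorem trace_mul_spectralSum_mul_conjTranspose_mul_spectralSum (L : Matrix n n ℂ)
    (f g : n → ℂ) :
    (L * spectralSum Ψ f * Lᴴ * spectralSum Ψ g).trace =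
      ∑ j, ∑ k, f j * g k * transitionWeight Ψ L j k := by
  have hjk (j k : n) :
      (L * vecMulVec (Ψ j) (star (Ψ j)) * Lᴴ * vecMulVec (Ψ k) (star (Ψ k))).trace =
        transitionWeight Ψ L j k := by
    rw [mul_vecMulVec, trace_vecMulVec, ← mulVec_mulVec, ← mulVec_mulVec, vecMulVec_mulVec,
      op_smul_eq_smul, mulVec_smul, smul_dotProduct, dotProduct_comm (L *ᵥ Ψ j),
      star_dotProduct_conjTranspose_mulVec, smul_eq_mul, Complex.star_def, Complex.conj_mul',
      transitionWeight]
    norm_cast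
  simp only [spectralSum, Finset.mul_sum, Finset.sum_mul, Matrix.mul_smul, Matrix.smul_mul,
    trace_sum, trace_smul, hjk, smul_eq_mul]
  rw [Finset.sum_comm]
  exact Finset.sum_congr rfl fun j _ => Finset.sum_congr rfl fun k _ => by ring

variable [DecidableEq n]

theorem spectralSum_one (hΨ : ∀ j m, star (Ψ j) ⬝ᵥ Ψ m = if j = m then 1 else 0) :
    spectralSum Ψ 1 = 1 := by
  let U : Matrix n n ℂ := of fun i j => Ψ j i
  have hUU : Uᴴ * U = 1 := by
    ext j m
    simpa [U, mul_apply, one_apply, dotProduct] using hΨ j m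
  ext i i'
  rw [← mul_eq_one_comm.mp hUU, mul_apply, spectralSum, Matrix.sum_apply]
  simp [U, vecMulVec_apply]

theorem spectralSum_mul_spectralSum (hΨ : ∀ j m, star (Ψ j) ⬝ᵥ Ψ m = if j = m then 1 else 0)
    (f g : n → ℂ) : spectralSum Ψ f * spectralSum Ψ g = spectralSum Ψ (f * g) := by
  simp only [spectralSum, Finset.sum_mul_sum, Matrix.smul_mul, Matrix.mul_smul,
    vecMulVec_mul_vecMulVec, hΨ, ite_smul, one_smul, zero_smul, smul_smul]
  simp [apply_ite, mul_comm]

theorem commute_spectralSum (hΨ : ∀ j m, star (Ψ j) ⬝ᵥ Ψ m = if j = m then 1 else 0)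
    (f g : n → ℂ) : Commute (spectralSum Ψ f) (spectralSum Ψ g) := by
  rw [Commute, SemiconjBy, spectralSum_mul_spectralSum hΨ, spectralSum_mul_spectralSum hΨ,
    mul_comm]

theorem eq_spectralSum_of_mulVec_eq (hΨ : ∀ j m, star (Ψ j) ⬝ᵥ Ψ m = if j = m then 1 else 0)
    {ρ : Matrix n n ℂ} {r : n → ℂ} (hρ : ∀ j, ρ *ᵥ Ψ j = r j • Ψ j) : ρ = spectralSum Ψ r := by
  calc ρ = ρ * spectralSum Ψ 1 := by rw [spectralSum_one hΨ, mul_one]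
    _ = spectralSum Ψ r := by
      simp only [spectralSum, Finset.mul_sum, Pi.one_apply, one_smul, mul_vecMulVec, hρ,
        smul_vecMulVec]

theorem trace_mul_spectralSum_mul_conjTranspose
    (hΨ : ∀ j m, star (Ψ j) ⬝ᵥ Ψ m = if j = m then 1 else 0) (L : Matrix n n ℂ) (f : n → ℂ) :
    (L * spectralSum Ψ f * Lᴴ).trace = ∑ j, ∑ k, f j * transitionWeight Ψ L j k := by
  rw [← mul_one (L * _ * _), ← spectralSum_one hΨ,
    trace_mul_spectralSum_mul_conjTranspose_mul_spectralSum]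
  simp only [Pi.one_apply, mul_one]

theorem trace_lindbladDissipator_spectralSum_mul_spectralSum
    (hΨ : ∀ j m, star (Ψ j) ⬝ᵥ Ψ m = if j = m then 1 else 0) (L : Matrix n n ℂ) (r g : n → ℂ) :
    (lindbladDissipator L (spectralSum Ψ r) * spectralSum Ψ g).trace =
      2 * ∑ j, ∑ k, transitionWeight Ψ L j k * r j * (g k - g j) := by
  have hdiag (f : n → ℂ) :
      (Lᴴ * L * spectralSum Ψ f).trace = ∑ j, ∑ k, f j * transitionWeight Ψ L j k := by
    rw [← trace_mul_spectralSum_mul_conjTranspose hΨ, trace_mul_cycle L]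
  have h₁ : (Lᴴ * L * spectralSum Ψ r * spectralSum Ψ g).trace =
      ∑ j, ∑ k, (r * g) j * transitionWeight Ψ L j k := by
    rw [Matrix.mul_assoc, spectralSum_mul_spectralSum hΨ, hdiag]
  have h₂ : (spectralSum Ψ r * (Lᴴ * L) * spectralSum Ψ g).trace =
      ∑ j, ∑ k, (g * r) j * transitionWeight Ψ L j k := by
    rw [trace_mul_cycle, spectralSum_mul_spectralSum hΨ, trace_mul_comm, hdiag]
  rw [lindbladDissipator, sub_mul, add_mul, smul_mul_assoc, trace_sub, trace_add, trace_smul,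
    trace_mul_spectralSum_mul_conjTranspose_mul_spectralSum, h₁, h₂]
  simp only [nsmul_eq_mul, Finset.mul_sum, ← Finset.sum_add_distrib, ← Finset.sum_sub_distrib,
    Pi.mul_apply]
  exact Finset.sum_congr rfl fun j _ => Finset.sum_congr rfl fun k _ => by ring

theorem trace_lindbladDissipator_spectralSum_mul
    (hΨ : ∀ j m, star (Ψ j) ⬝ᵥ Ψ m = if j = m then 1 else 0) {H L : Matrix n n ℂ} {ω : ℝ}
    (hH : H.IsHermitian) (hL : H * L - L * H = (ω : ℂ) • L) (β c : ℂ) (r g : n → ℂ) :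
    (lindbladDissipator L (spectralSum Ψ r) * (-β • H - c • 1 - spectralSum Ψ g)).trace =
      -2 * ∑ j, ∑ k, transitionWeight Ψ L j k * r j * (g k - g j + ω * β) := by
  rw [mul_sub, mul_sub, Matrix.mul_smul, Matrix.mul_smul, mul_one, trace_sub, trace_sub,
    trace_smul, trace_smul, trace_lindbladDissipator_mul_of_commutator hH hL,
    trace_lindbladDissipator, trace_mul_spectralSum_mul_conjTranspose hΨ,
    trace_lindbladDissipator_spectralSum_mul_spectralSum hΨ]
  simp only [smul_eq_mul, mul_zero, sub_zero, Finset.mul_sum, ← Finset.sum_sub_distrib]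
  exact Finset.sum_congr rfl fun j _ => Finset.sum_congr rfl fun k _ => by ring

theorem trace_lindbladDissipatorPair_spectralSum_mul
    (hΨ : ∀ j m, star (Ψ j) ⬝ᵥ Ψ m = if j = m then 1 else 0) {H L : Matrix n n ℂ} {ω : ℝ}
    (hH : H.IsHermitian) (hL : H * L - L * H = (ω : ℂ) • L) (a b β c : ℂ) (r g : n → ℂ) :
    (lindbladDissipatorPair a b L (spectralSum Ψ r) *
        (-β • H - c • 1 - spectralSum Ψ g)).trace =
      2 * ∑ j, ∑ k, transitionWeight Ψ L j k * ((b * r k - a * r j) * (g k - g j + ω * β)) := by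
  rw [lindbladDissipatorPair, add_mul, smul_mul_assoc, smul_mul_assoc, trace_add, trace_smul,
    trace_smul, trace_lindbladDissipator_spectralSum_mul hΨ hH hL,
    trace_lindbladDissipator_spectralSum_mul hΨ hH (hH.commutator_conjTranspose hL)]
  simp only [transitionWeight_conjTranspose]
  rw [Finset.sum_comm (f := fun j k => (transitionWeight Ψ L k j : ℂ) * r j * _)]
  simp only [smul_eq_mul, Finset.mul_sum, ← Finset.sum_add_distrib]
  exact Finset.sum_congr rfl fun j _ => Finset.sum_congr rfl fun k _ => by push_cast; ring

end Spectral

section PiKronecker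

variable {ι d : Type*} [Fintype ι] [DecidableEq ι] [Fintype d]

def Matrix.piKronecker (A : ι → Matrix d d ℂ) : Matrix (ι → d) (ι → d) ℂ :=
  of fun x y => ∏ i, A i (x i) (y i)

theorem Matrix.piKronecker_mul (A B : ι → Matrix d d ℂ) :
    piKronecker A * piKronecker B = piKronecker (A * B) := by
  ext x y
  simp only [piKronecker, mul_apply, of_apply, Pi.mul_apply, ← Finset.prod_mul_distrib,
    Finset.prod_univ_sum, Fintype.piFinset_univ]

end PiKronecker

theorem sz_mul_sub_mul_sz_sx : sz * sx - sx * sz = (2 * Complex.I) • sy := by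
  ext i j
  fin_cases i <;> fin_cases j <;> norm_num [sx, sy, sz] <;> ring_nf <;> norm_num [Complex.I_sq]

theorem sz_mul_sub_mul_sz_sy : sz * sy - sy * sz = (-2 * Complex.I) • sx := by
  ext i j; fin_cases i <;> fin_cases j <;> norm_num [sx, sy, sz] <;> ring

theorem sz_mul_sub_mul_sz_sp : sz * sp - sp * sz = (2 : ℂ) • sp := by
  ext i j; fin_cases i <;> fin_cases j <;> norm_num [sp, sz]

theorem sz_isHermitian : sz.IsHermitian := by
  ext i j; fin_cases i <;> fin_cases j <;> simp [sz]

theorem sp_conjTranspose : spᴴ = sm := by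
  ext i j; fin_cases i <;> fin_cases j <;> simp [sp, sm]

theorem sm_mul_sp : sm * sp = nm := by
  ext i j; fin_cases i <;> fin_cases j <;> simp [sm, sp, nm, mul_apply]

theorem sp_mul_sm : sp * sm = np := by
  ext i j; fin_cases i <;> fin_cases j <;> simp [sm, sp, np, mul_apply]

section SpinChain

variable {N : ℕ}

theorem site_eq_piKronecker (k : Fin N) (M : Matrix (Fin 2) (Fin 2) ℂ) :
    site k M = piKronecker (Function.update 1 k M) := by
  ext x y
  simp only [site, piKronecker, of_apply, Function.update_apply, Pi.one_apply]
  congr! 2 with j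
  split_ifs <;> simp_all [one_apply]

theorem site_mul_site (k : Fin N) (A B : Matrix (Fin 2) (Fin 2) ℂ) :
    site k A * site k B = site k (A * B) := by
  rw [site_eq_piKronecker, site_eq_piKronecker, piKronecker_mul, ← Function.update_mul, mul_one,
    site_eq_piKronecker]

theorem site_mul_site_comm {k l : Fin N} (hkl : k ≠ l) (A B : Matrix (Fin 2) (Fin 2) ℂ) :
    site k A * site l B = site l B * site k A := by
  simp only [site_eq_piKronecker, piKronecker_mul]
  congr 1
  ext j : 1
  rcases eq_or_ne j k with rfl | hjk
  · simp [hkl]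
  · rcases eq_or_ne j l with rfl | hjl <;> simp [*]

theorem site_apply (k : Fin N) (M : Matrix (Fin 2) (Fin 2) ℂ) (x y : Spin N) :
    site k M x y = M (x k) (y k) * ∏ j ∈ {k}ᶜ, (1 : Matrix (Fin 2) (Fin 2) ℂ) (x j) (y j) := by
  rw [site_eq_piKronecker, piKronecker, of_apply, Fintype.prod_eq_mul_prod_compl k,
    Function.update_self]
  congr 1
  refine Finset.prod_congr rfl fun j hj => ?_
  rw [Function.update_of_ne (by simpa using hj)]
  rfl

theorem site_sub (k : Fin N) (A B : Matrix (Fin 2) (Fin 2) ℂ) :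
    site k (A - B) = site k A - site k B := by
  ext x y
  rw [Matrix.sub_apply, site_apply, site_apply, site_apply, Matrix.sub_apply, sub_mul]

theorem site_smul (k : Fin N) (c : ℂ) (A : Matrix (Fin 2) (Fin 2) ℂ) :
    site k (c • A) = c • site k A := by
  ext x y
  rw [Matrix.smul_apply, site_apply, site_apply, Matrix.smul_apply, smul_eq_mul, smul_eq_mul,
    mul_assoc]

theorem site_conjTranspose (k : Fin N) (A : Matrix (Fin 2) (Fin 2) ℂ) :
    (site k A)ᴴ = site k Aᴴ := by
  ext x y
  rw [conjTranspose_apply, site_apply, site_apply, star_mul', star_prod]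
  simp_rw [← conjTranspose_apply, conjTranspose_one]

theorem isHermitian_sum_site_sz : (∑ k : Fin N, site k sz).IsHermitian :=
  isSelfAdjoint_sum _ fun k _ => by
    rw [← isHermitian_iff_isSelfAdjoint, IsHermitian, site_conjTranspose, sz_isHermitian.eq]

theorem sum_site_sz_commutator {M M' : Matrix (Fin 2) (Fin 2) ℂ} {c : ℂ}
    (h : sz * M - M * sz = c • M') (b : Fin N) :
    (∑ k, site k sz) * site b M - site b M * ∑ k, site k sz = c • site b M' := by
  rw [Finset.sum_mul, Finset.mul_sum, ← Finset.sum_sub_distrib,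
    Finset.sum_eq_single b (fun k _ hk => by rw [site_mul_site_comm hk, sub_self]) (by simp),
    site_mul_site, site_mul_site, ← site_sub, h, site_smul]

theorem commute_sum_site_sz_hopping (k l : Fin N) :
    Commute (∑ m, site m sz) (site k sx * site l sx + site k sy * site l sy) := by
  set H₀ := ∑ m, site m sz
  have hx := sum_site_sz_commutator sz_mul_sub_mul_sz_sx (N := N)
  have hy := sum_site_sz_commutator sz_mul_sub_mul_sz_sy (N := N)
  rw [Commute, SemiconjBy, ← sub_eq_zero]
  calc H₀ * (site k sx * site l sx + site k sy * site l sy)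
        - (site k sx * site l sx + site k sy * site l sy) * H₀
      = (H₀ * site k sx - site k sx * H₀) * site l sx
        + site k sx * (H₀ * site l sx - site l sx * H₀)
        + (H₀ * site k sy - site k sy * H₀) * site l sy
        + site k sy * (H₀ * site l sy - site l sy * H₀) := by noncomm_ring
    _ = 0 := by
      rw [hx, hx, hy, hy]
      simp only [Matrix.smul_mul, Matrix.mul_smul]
      module

theorem commute_sum_site_sz_HS : Commute (∑ k : Fin N, site k sz) (HS N) :=
  (Commute.refl _).add_right <| Commute.sum_right _ _ _ fun k _ => Commute.sum_right _ _ _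
    fun l _ => by split_ifs <;> simp [commute_sum_site_sz_hopping]

theorem dissStarAt_eq_lindbladDissipatorPair (k : Fin N) (β : ℝ)
    (ρ : Matrix (Spin N) (Spin N) ℂ) :
    dissStarAt k β ρ = lindbladDissipatorPair (2 * b0 β) (2 * b1 β) (site k sp) ρ := by
  rw [dissStarAt, lindbladDissipatorPair, lindbladDissipator, lindbladDissipator,
    conjTranspose_conjTranspose, site_conjTranspose, sp_conjTranspose, site_mul_site,
    site_mul_site, sm_mul_sp, sp_mul_sm]

end SpinChain

theorem b1_eq_exp_mul_b0 (β : ℝ) : b1 β = Real.exp (2 * β) * b0 β := by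
  rw [b0, b1, mul_div_assoc', ← Real.exp_add]
  ring_nf

/-- Entropy production formula at equal temperatures: with
`log ρ = Σ_j ln(ρ_j)|Ψ_j⟩⟨Ψ_j|` and `log ρ^β = −βH^{(S)} − ln Z`,
`σ(ρ) = Tr(L*(ρ)(log ρ^β − log ρ))
  = 4β₀ Σ_{j,k} (|⟨Ψ_k,σ₊^{(1)}Ψ_j⟩|² + |⟨Ψ_k,σ₊^{(N)}Ψ_j⟩|²)(e^{2β}ρ_k − ρ_j)(ln ρ_k − ln ρ_j + 2β)`. -/
theorem entropy_production_formula (N : ℕ) (hN : 2 ≤ N) (β : ℝ)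
    (ρ : Matrix (Spin N) (Spin N) ℂ)
    (Ψ : Spin N → (Spin N → ℂ)) (r : Spin N → ℝ)
    (hON : ∀ j m : Spin N, star (Ψ j) ⬝ᵥ Ψ m = if j = m then 1 else 0)
    (heig : ∀ j : Spin N, ρ.mulVec (Ψ j) = ((r j : ℝ) : ℂ) • Ψ j) :
    (LtwoStar (⟨0, by omega⟩ : Fin N) (⟨N - 1, by omega⟩ : Fin N) β β ρ *
        ((-(β : ℂ) • ∑ k : Fin N, site k sz -
            Complex.log ((NormedSpace.exp (-(β : ℂ) • ∑ k : Fin N, site k sz)).trace) •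
              (1 : Matrix (Spin N) (Spin N) ℂ)) -
          ∑ j : Spin N, ((Real.log (r j) : ℝ) : ℂ) • Matrix.vecMulVec (Ψ j) (star (Ψ j)))).trace =
      ((4 * b0 β) * ∑ j : Spin N, ∑ k : Spin N,
        ((‖star (Ψ k) ⬝ᵥ (site (⟨0, by omega⟩ : Fin N) sp).mulVec (Ψ j)‖) ^ 2 +
            (‖star (Ψ k) ⬝ᵥ (site (⟨N - 1, by omega⟩ : Fin N) sp).mulVec (Ψ j)‖) ^ 2) *
          ((Real.exp (2 * β) * r k - r j) * (Real.log (r k) - Real.log (r j) + 2 * β)) : ℝ) := by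
  obtain rfl := eq_spectralSum_of_mulVec_eq hON heig
  have hL (b : Fin N) : (∑ k, site k sz) * site b sp - site b sp * ∑ k, site k sz =
      ((2 : ℝ) : ℂ) • site b sp := by
    exact_mod_cast sum_site_sz_commutator sz_mul_sub_mul_sz_sp b
  rw [show ∑ j, ((Real.log (r j) : ℝ) : ℂ) • vecMulVec (Ψ j) (star (Ψ j)) =
      spectralSum Ψ (fun j => (Real.log (r j) : ℂ)) from rfl,
    LtwoStar, add_mul, add_mul, trace_add, trace_add, smul_mul_assoc, trace_smul,
    trace_commutator_mul_eq_zero commute_sum_site_sz_HS (commute_spectralSum hON _ _),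
    dissStarAt_eq_lindbladDissipatorPair, dissStarAt_eq_lindbladDissipatorPair,
    trace_lindbladDissipatorPair_spectralSum_mul hON isHermitian_sum_site_sz (hL _),
    trace_lindbladDissipatorPair_spectralSum_mul hON isHermitian_sum_site_sz (hL _),
    b1_eq_exp_mul_b0]
  simp only [transitionWeight, smul_zero, zero_add, Finset.mul_sum, ← Finset.sum_add_distrib]
  push_cast
  exact Finset.sum_congr rfl fun j _ => Finset.sum_congr rfl fun k _ => by ring
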